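/- arXiv:2112.14674 — 2 statements merged into one kernel-verified Lean document; each statement's English description precedes it below -/
import Mathlib

section
/- Let X = (X^1,...,X^p) ∈ {−1,1}^p, p ≥ 3, follow a symmetric Ising model with respect to the graph G = (V, E). Fix a pair i ≠ j and suppose that X^i has linear conditional mean with respect to X^{−{i,j}}. Then X^i and X^j are conditionally independent given X^{−{i,j}} if and only if X^i and X^j are additively conditionally independent given X^{−{i,j}}. -/
open MeasureTheory

noncomputable section

/-- Expectation of a real-valued random variable. -/
def expec {Ω : Type*} [MeasurableSpace Ω] (μ : Measure Ω) (f : Ω → ℝ) : ℝ := ∫ ω, f ω ∂μ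

/-- Covariance of two real-valued random variables. -/
def covRV {Ω : Type*} [MeasurableSpace Ω] (μ : Measure Ω) (f g : Ω → ℝ) : ℝ :=
  expec μ (fun ω => f ω * g ω) - expec μ f * expec μ g

/-- The additive space `𝒜_{X^A}`: the linear span (inside the functions on `Ω`) of the
mean-zero functions of the single coordinates `X^k`, `k ∈ A`. -/
def addSpace {Ω ι α : Type*} [MeasurableSpace Ω] (μ : Measure Ω)
    (X : Ω → ι → α) (A : Set ι) : Submodule ℝ (Ω → ℝ) :=
  Submodule.span ℝ {f | ∃ k ∈ A, ∃ φ : α → ℝ,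
    expec μ (fun ω => φ (X ω k)) = 0 ∧ f = fun ω => φ (X ω k)}

/-- Additive conditional independence of `X^A` and `X^B` given `X^C`:
`(𝒜_A + 𝒜_C) ⊖ 𝒜_C` is orthogonal in `L²(P)` to `(𝒜_B + 𝒜_C) ⊖ 𝒜_C`. -/
def ACI {Ω ι α : Type*} [MeasurableSpace Ω] (μ : Measure Ω)
    (X : Ω → ι → α) (A B C : Set ι) : Prop :=
  ∀ f ∈ addSpace μ X (A ∪ C),
    (∀ h ∈ addSpace μ X C, expec μ (fun ω => f ω * h ω) = 0) →
  ∀ g ∈ addSpace μ X (B ∪ C),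
    (∀ h ∈ addSpace μ X C, expec μ (fun ω => g ω * h ω) = 0) →
      expec μ (fun ω => f ω * g ω) = 0

/-- Conditional independence of the coordinates `X^i` and `X^j` given the remaining
coordinates `X^{-{i,j}}`, expressed by the standard factorization of the joint law of
discrete variables. -/
def CIpair {Ω ι α : Type*} [MeasurableSpace Ω] (μ : Measure Ω)
    (X : Ω → ι → α) (i j : ι) : Prop :=
  ∀ (a b : α) (z : ι → α),
    μ {ω | X ω i = a ∧ X ω j = b ∧ ∀ k, k ≠ i → k ≠ j → X ω k = z k} *
      μ {ω | ∀ k, k ≠ i → k ≠ j → X ω k = z k} =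
    μ {ω | X ω i = a ∧ ∀ k, k ≠ i → k ≠ j → X ω k = z k} *
      μ {ω | X ω j = b ∧ ∀ k, k ≠ i → k ≠ j → X ω k = z k}

/-- The indicator vector `V(x) = (1_{{1}}(x), …, 1_{{m}}(x))` of a value in `{0,1,…,m}`. -/
def Vfun {m : ℕ} (x : Fin (m + 1)) : Fin m → ℝ :=
  fun a => if (x : ℕ) = (a : ℕ) + 1 then 1 else 0

/-- Adjacency relation of the reduced graph obtained from `E` by removing the edge `(i,j)`
(in both directions) and all edges between `R` and its complement. -/
def reducedAdj {ι : Type*} (E : Set (ι × ι)) (i j : ι) (R : Set ι) : ι → ι → Prop :=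
  fun k l => (k, l) ∈ E ∧ ¬(k = i ∧ l = j) ∧ ¬(k = j ∧ l = i) ∧ (k ∈ R ↔ l ∈ R)

/-- `R ⊆ V ∖ {i,j}` is an `(i,j)`-separator: in the reduced graph, `i` and `j` lie in
distinct connected components, i.e. `j` is not reachable from `i`. -/
def IsSeparator {ι : Type*} (E : Set (ι × ι)) (i j : ι) (R : Set ι) : Prop :=
  i ∉ R ∧ j ∉ R ∧ ¬ Relation.ReflTransGen (reducedAdj E i j R) i j

/-- The node set of the connected component of `k` in the reduced graph. -/
def component {ι : Type*} (E : Set (ι × ι)) (i j : ι) (R : Set ι) (k : ι) : Set ι :=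
  {l | Relation.ReflTransGen (reducedAdj E i j R) k l}

/-- A real-valued node variable `X^k` has linear conditional mean with respect to `X^D`:
either `D = ∅`, or there is `ξ ∈ ℝ^D` with `E(X^k − E X^k | X^D) = ξᵀ (X^D − E X^D)` a.s.
(stated via integration over each event `{X^D = z}`). -/
def LinCondMean {Ω ι : Type*} [MeasurableSpace Ω] [Fintype ι] (μ : MeasureTheory.Measure Ω)
    (X : Ω → ι → ℝ) (k : ι) (D : Set ι) : Prop :=
  D = ∅ ∨ ∃ ξ : ι → ℝ, (∀ d, d ∉ D → ξ d = 0) ∧ ∀ z : ι → ℝ,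
    (∫ ω in {ω | ∀ d ∈ D, X ω d = z d}, (X ω k - expec μ fun ω' => X ω' k) ∂μ) =
      (∑ d : ι, ξ d * (z d - expec μ fun ω' => X ω' d)) *
        (μ {ω | ∀ d ∈ D, X ω d = z d}).toReal

/-- The `±1` vector associated with a Boolean configuration. -/
def signVec {p : ℕ} (s : Fin p → Bool) : Fin p → ℝ := fun k => if s k then 1 else -1

/-- The (unnormalized) symmetric Ising weight `exp(Σ_{i<j} β_{ij} x^i x^j)`. -/
def isingWeight {p : ℕ} (β : Matrix (Fin p) (Fin p) ℝ) (x : Fin p → ℝ) : ℝ :=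
  Real.exp (∑ i : Fin p, ∑ j : Fin p, if i < j then β i j * x i * x j else 0)

/-- The partition function of the symmetric Ising model. -/
def isingZ {p : ℕ} (β : Matrix (Fin p) (Fin p) ℝ) : ℝ :=
  ∑ s : Fin p → Bool, isingWeight β (signVec s)

/-- `X` follows the symmetric Ising model with parameter `β` (symmetric, zero diagonal):
`X` takes values in `{−1,1}^p` and has p.m.f. `z(β)⁻¹ exp(Σ_{i<j} β_{ij} x^i x^j)`. -/
def IsSymIsing {Ω : Type*} [MeasurableSpace Ω] (μ : MeasureTheory.Measure Ω) {p : ℕ}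
    (X : Ω → Fin p → ℝ) (β : Matrix (Fin p) (Fin p) ℝ) : Prop :=
  β.IsSymm ∧ (∀ i, β i i = 0) ∧ (∀ ω k, X ω k = 1 ∨ X ω k = -1) ∧
    ∀ s : Fin p → Bool,
      μ {ω | ∀ k, X ω k = signVec s k} =
        ENNReal.ofReal (isingWeight β (signVec s) / isingZ β)

/-- The edge set of the (symmetric) Ising model: `(i,j) ∈ E` iff `i ≠ j` and `β_{ij} ≠ 0`. -/
def isingEdges {p : ℕ} (β : Matrix (Fin p) (Fin p) ℝ) : Set (Fin p × Fin p) :=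
  {e | e.1 ≠ e.2 ∧ β e.1 e.2 ≠ 0}

/-!
Write `q_y(a, b)` for the probability of the configuration that agrees with `y` off `{i, j}` and
has `X^i = a`, `X^j = b`. Because the Ising weight has only pairwise interactions, the odds ratio
`q_y(+,+) q_y(-,-) / (q_y(+,-) q_y(-,+))` equals `κ = exp (4 β_ij)` on every fibre `y`.
Conditional independence says that every fibre table has determinant zero, i.e. `κ = 1`.

For `±1`-valued coordinates every additive space is the span of the centred coordinates.
Linear conditional mean makes `f = X^i - E X^i - ξᵀ (X^C - E X^C)` orthogonal to `𝒜_{X^C}`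
(its mean vanishes on every fibre), so `(𝒜_{X^i} + 𝒜_{X^C}) ⊖ 𝒜_{X^C}` is spanned by `f` and
additive conditional independence reduces to `E[f X^j] = 0`. Computing fibrewise with the
`2 × 2` table identity, `E[f X^j] = (κ - 1) Σ_y q_y(+,-) q_y(-,+) / Σ_{a,b} q_y(a, b)`, so both
notions of independence are equivalent to `κ = 1`.
-/

section FiniteLaw

variable {Ω α : Type*} [MeasurableSpace Ω] {μ : Measure Ω} [IsFiniteMeasure μ]
  [Fintype α] [MeasurableSpace α] [MeasurableSingletonClass α] {Y : Ω → α}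

theorem expec_comp_eq_sum (hY : Measurable Y) (G : α → ℝ) :
    expec μ (fun ω => G (Y ω)) = ∑ a, μ.real (Y ⁻¹' {a}) * G a := by
  rw [expec, ← integral_map hY.aemeasurable (measurable_of_countable G).aestronglyMeasurable,
    integral_fintype (.of_finite)]
  simp only [map_measureReal_apply hY (measurableSet_singleton _), smul_eq_mul]

theorem setIntegral_preimage_eq_sum (hY : Measurable Y) (S : Set α) (G : α → ℝ) :
    ∫ ω in Y ⁻¹' S, G (Y ω) ∂μ = ∑ a, μ.real (Y ⁻¹' {a}) * S.indicator G a := by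
  rw [← integral_indicator (hY (Set.Finite.measurableSet S.toFinite))]
  exact expec_comp_eq_sum hY (S.indicator G)

theorem measureReal_preimage_eq_sum (hY : Measurable Y) (S : Set α) :
    μ.real (Y ⁻¹' S) = ∑ a, μ.real (Y ⁻¹' {a}) * S.indicator 1 a := by
  rw [← setIntegral_preimage_eq_sum hY S 1]
  simp

end FiniteLaw

section Pair

variable {ι α : Type*} (i j : ι)

def EqOffPair (s y : ι → α) : Prop := ∀ k, k ≠ i → k ≠ j → s k = y k

theorem EqOffPair.symm {i j : ι} {s y : ι → α} (h : EqOffPair i j s y) : EqOffPair i j y s :=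
  fun k hki hkj => (h k hki hkj).symm

variable [DecidableEq ι]

def updatePair (y : ι → α) (a b : α) : ι → α :=
  Function.update (Function.update y i a) j b

variable {i j}

theorem updatePair_apply (y : ι → α) (a b : α) (k : ι) :
    updatePair i j y a b k = if k = j then b else if k = i then a else y k := by
  simp only [updatePair, Function.update_apply]

theorem updatePair_apply_left (hij : i ≠ j) (y : ι → α) (a b : α) :
    updatePair i j y a b i = a := by
  simp [updatePair_apply, hij]

theorem updatePair_apply_right (y : ι → α) (a b : α) : updatePair i j y a b j = b := by
  simp [updatePair_apply]

theorem eqOffPair_updatePair (y : ι → α) (a b : α) : EqOffPair i j (updatePair i j y a b) y :=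
  fun k hki hkj => by simp [updatePair_apply, hki, hkj]

theorem EqOffPair.updatePair_eq {s y : ι → α} (h : EqOffPair i j s y) :
    updatePair i j y (s i) (s j) = s := by
  funext k
  rw [updatePair_apply]
  split_ifs with hkj hki
  · rw [hkj]
  · rw [hki]
  · exact (h k hki hkj).symm

variable [Fintype ι]

theorem sum_indicator_eqOffPair (hij : i ≠ j) (y : ι → Bool) (G : (ι → Bool) → ℝ) :
    ∑ s, {s | EqOffPair i j s y}.indicator G s = ∑ a, ∑ b, G (updatePair i j y a b) := by
  classical
  rw [← Fintype.sum_prod_type',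
    ← Finset.sum_filter_of_ne (p := (· ∈ {s | EqOffPair i j s y}))
    (fun s _ h => by by_contra hs; exact h (Set.indicator_of_notMem hs G))]
  refine Finset.sum_nbij' (fun s => (s i, s j)) (fun ab => updatePair i j y ab.1 ab.2)
    (by simp) (fun ab _ => by simpa using eqOffPair_updatePair y ab.1 ab.2) (fun s hs => ?_)
    (fun ab _ => by simp [updatePair_apply_left hij, updatePair_apply_right])
    (fun s hs => ?_)
  · exact (Finset.mem_filter.1 hs).2.updatePair_eq
  · have hs' := (Finset.mem_filter.1 hs).2
    rw [Set.indicator_of_mem hs', hs'.updatePair_eq]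

theorem sum_sum_sum_updatePair (hij : i ≠ j) (G : (ι → Bool) → ℝ) :
    ∑ y, ∑ a, ∑ b, G (updatePair i j y a b) = 4 * ∑ s, G s := by
  classical
  calc ∑ y, ∑ a, ∑ b, G (updatePair i j y a b)
      = ∑ s, ∑ y, {y | EqOffPair i j y s}.indicator (fun _ => G s) y := by
        simp_rw [← sum_indicator_eqOffPair hij]
        rw [Finset.sum_comm]
        refine Finset.sum_congr rfl fun s _ => Finset.sum_congr rfl fun y _ => ?_
        simp only [Set.indicator_apply, Set.mem_ofPred_eq]
        exact if_congr ⟨EqOffPair.symm, EqOffPair.symm⟩ rfl rfl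
    _ = 4 * ∑ s, G s := by
        simp_rw [sum_indicator_eqOffPair hij, Fintype.sum_bool, Finset.mul_sum]
        ring_nf

theorem sum_mul_indicator_eqOffPair (hij : i ≠ j) (π : (ι → Bool) → ℝ) (y : ι → Bool)
    (U V : Set Bool) :
    ∑ s, π s * {s | s i ∈ U ∧ s j ∈ V ∧ EqOffPair i j s y}.indicator 1 s
      = ∑ a, ∑ b, U.indicator 1 a * V.indicator 1 b * π (updatePair i j y a b) := by
  classical
  have h := sum_indicator_eqOffPair hij y
    (fun s => U.indicator 1 (s i) * V.indicator 1 (s j) * π s)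
  simp only [updatePair_apply_left hij, updatePair_apply_right] at h
  rw [← h]
  refine Finset.sum_congr rfl fun s _ => ?_
  simp only [Set.indicator_apply, Set.mem_ofPred_eq, Pi.one_apply]
  split_ifs <;> simp_all

end Pair

theorem sum_table_mul_sum_sub (q : Bool → Bool → ℝ) (u v : Bool → ℝ) :
    (∑ a, ∑ b, u a * v b * q a b) * (∑ a, ∑ b, q a b)
      - (∑ a, ∑ b, u a * q a b) * (∑ a, ∑ b, v b * q a b)
      = (u true - u false) * (v true - v false)
        * (q true true * q false false - q true false * q false true) := by
  simp only [Fintype.sum_bool]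
  ring

theorem signVec_updatePair_apply {p : ℕ} (i j : Fin p) (y : Fin p → Bool) (a b : Bool)
    (k : Fin p) :
    signVec (updatePair i j y a b) k
      = if k = j then (if b then 1 else -1)
        else if k = i then (if a then 1 else -1) else signVec y k := by
  simp only [signVec, updatePair_apply]
  split_ifs <;> rfl

theorem mixedDiff_signVec_updatePair_mul {p : ℕ} {i j : Fin p} (hij : i ≠ j)
    (y : Fin p → Bool) (k l : Fin p) :
    signVec (updatePair i j y true true) k * signVec (updatePair i j y true true) l
      + signVec (updatePair i j y false false) k * signVec (updatePair i j y false false) l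
      - signVec (updatePair i j y true false) k * signVec (updatePair i j y true false) l
      - signVec (updatePair i j y false true) k * signVec (updatePair i j y false true) l
      = 4 * ((if k = i ∧ l = j then 1 else 0) + (if k = j ∧ l = i then 1 else 0)) := by
  simp only [signVec_updatePair_apply]
  by_cases hki : k = i <;> by_cases hkj : k = j <;> by_cases hli : l = i <;>
    by_cases hlj : l = j <;> simp_all <;> ring

def isingEnergy {p : ℕ} (β : Matrix (Fin p) (Fin p) ℝ) (x : Fin p → ℝ) : ℝ :=
  ∑ k : Fin p, ∑ l : Fin p, if k < l then β k l * x k * x l else 0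

theorem isingEnergy_updatePair {p : ℕ} (β : Matrix (Fin p) (Fin p) ℝ) (hβ : β.IsSymm)
    {i j : Fin p} (hij : i ≠ j) (y : Fin p → Bool) :
    isingEnergy β (signVec (updatePair i j y true true))
        + isingEnergy β (signVec (updatePair i j y false false))
      = 4 * β i j + (isingEnergy β (signVec (updatePair i j y true false))
        + isingEnergy β (signVec (updatePair i j y false true))) := by
  set g : Fin p × Fin p → ℝ := fun x => if x.1 < x.2 then β x.1 x.2 *
    (4 * ((if x.1 = i ∧ x.2 = j then 1 else 0) + (if x.1 = j ∧ x.2 = i then 1 else 0))) else 0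
  have hdiff : isingEnergy β (signVec (updatePair i j y true true))
        + isingEnergy β (signVec (updatePair i j y false false))
        - isingEnergy β (signVec (updatePair i j y true false))
        - isingEnergy β (signVec (updatePair i j y false true)) = ∑ x, g x := by
    rw [Fintype.sum_prod_type]
    simp only [isingEnergy, g, ← Finset.sum_sub_distrib, ← Finset.sum_add_distrib,
      ← mixedDiff_signVec_updatePair_mul hij y]
    refine Finset.sum_congr rfl fun k _ => Finset.sum_congr rfl fun l _ => ?_
    split_ifs <;> ring
  have hji : β j i = β i j := hβ.apply i j
  rw [Fintype.sum_eq_add (i, j) (j, i) (by simp [hij]) (fun x hx => by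
    simp only [g]; split_ifs <;> simp_all [Prod.ext_iff])] at hdiff
  rcases lt_or_gt_of_ne hij with h | h <;>
    simp [g, h, h.not_gt, hij, hij.symm, hji] at hdiff <;> linarith

theorem isingWeight_mul_isingWeight {p : ℕ} (β : Matrix (Fin p) (Fin p) ℝ) (hβ : β.IsSymm)
    {i j : Fin p} (hij : i ≠ j) (y : Fin p → Bool) :
    isingWeight β (signVec (updatePair i j y true true))
        * isingWeight β (signVec (updatePair i j y false false))
      = Real.exp (4 * β i j) * (isingWeight β (signVec (updatePair i j y true false))
        * isingWeight β (signVec (updatePair i j y false true))) := by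
  simp only [isingWeight, ← Real.exp_add]
  exact congrArg Real.exp (isingEnergy_updatePair β hβ hij y)

theorem isingWeight_pos {p : ℕ} (β : Matrix (Fin p) (Fin p) ℝ) (x : Fin p → ℝ) :
    0 < isingWeight β x :=
  Real.exp_pos _

theorem isingZ_pos {p : ℕ} (β : Matrix (Fin p) (Fin p) ℝ) : 0 < isingZ β :=
  Finset.sum_pos (fun _ _ => isingWeight_pos β _) Finset.univ_nonempty

theorem signVec_apply_eq_iff {p : ℕ} {s t : Fin p → Bool} {k l : Fin p} :
    signVec s k = signVec t l ↔ s k = t l := by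
  cases hs : s k <;> cases ht : t l <;> norm_num [signVec, hs, ht]

theorem signVec_injective {p : ℕ} : Function.Injective (signVec (p := p)) :=
  fun _ _ h => funext fun k => signVec_apply_eq_iff.1 (congrFun h k)

section Spins

variable {Ω : Type*} {p : ℕ} {X : Ω → Fin p → ℝ}

-- Functions of `X` are handled as functions of this Boolean configuration (`true` for `+1`).
def spins (X : Ω → Fin p → ℝ) (ω : Ω) : Fin p → Bool := fun k => decide (X ω k = 1)

theorem measurable_spins [MeasurableSpace Ω] (hX : ∀ k, Measurable fun ω => X ω k) :
    Measurable (spins X) :=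
  measurable_pi_iff.2 fun k => measurable_to_bool <| by
    simpa [spins, Set.preimage] using hX k (measurableSet_singleton 1)

theorem signVec_spins (hpm : ∀ ω k, X ω k = 1 ∨ X ω k = -1) (ω : Ω) :
    signVec (spins X ω) = X ω := by
  funext k
  rcases hpm ω k with h | h <;> norm_num [signVec, spins, h]

theorem setOf_eq_preimage_spins (hpm : ∀ ω k, X ω k = 1 ∨ X ω k = -1)
    (Φ : (Fin p → ℝ) → Prop) : {ω | Φ (X ω)} = spins X ⁻¹' {s | Φ (signVec s)} := by
  ext ω
  simp only [Set.mem_preimage, Set.mem_ofPred_eq, signVec_spins hpm]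

theorem preimage_spins_singleton (hpm : ∀ ω k, X ω k = 1 ∨ X ω k = -1) (s : Fin p → Bool) :
    spins X ⁻¹' {s} = {ω | ∀ k, X ω k = signVec s k} := by
  rw [setOf_eq_preimage_spins hpm (fun x => ∀ k, x k = signVec s k)]
  ext ω
  simp only [Set.mem_preimage, Set.mem_singleton_iff, Set.mem_ofPred_eq, ← funext_iff,
    signVec_injective.eq_iff]

def spinLaw [MeasurableSpace Ω] (μ : Measure Ω) (X : Ω → Fin p → ℝ) (s : Fin p → Bool) :
    ℝ :=
  μ.real (spins X ⁻¹' {s})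

variable [MeasurableSpace Ω] {μ : Measure Ω}

theorem spinLaw_eq_of_isSymIsing {β : Matrix (Fin p) (Fin p) ℝ} (h : IsSymIsing μ X β)
    (s : Fin p → Bool) : spinLaw μ X s = isingWeight β (signVec s) / isingZ β := by
  rw [spinLaw, measureReal_def, preimage_spins_singleton h.2.2.1, h.2.2.2,
    ENNReal.toReal_ofReal (isingWeight_pos β _ |>.le |> (div_nonneg · (isingZ_pos β).le))]

theorem spinLaw_pos_of_isSymIsing {β : Matrix (Fin p) (Fin p) ℝ} (h : IsSymIsing μ X β)
    (s : Fin p → Bool) : 0 < spinLaw μ X s := by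
  rw [spinLaw_eq_of_isSymIsing h]
  exact div_pos (isingWeight_pos β _) (isingZ_pos β)

theorem spinLaw_updatePair_cross_of_isSymIsing {β : Matrix (Fin p) (Fin p) ℝ}
    (h : IsSymIsing μ X β) {i j : Fin p} (hij : i ≠ j) (y : Fin p → Bool) :
    spinLaw μ X (updatePair i j y true true) * spinLaw μ X (updatePair i j y false false)
      = Real.exp (4 * β i j) * (spinLaw μ X (updatePair i j y true false)
        * spinLaw μ X (updatePair i j y false true)) := by
  simp only [spinLaw_eq_of_isSymIsing h, div_mul_div_comm,
    isingWeight_mul_isingWeight β h.1 hij, mul_div_assoc]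

variable [IsFiniteMeasure μ]

theorem expec_comp_eq_sum_spinLaw (hX : ∀ k, Measurable fun ω => X ω k)
    (hpm : ∀ ω k, X ω k = 1 ∨ X ω k = -1) (F : (Fin p → ℝ) → ℝ) :
    expec μ (fun ω => F (X ω)) = ∑ s, spinLaw μ X s * F (signVec s) := by
  simp_rw [← signVec_spins hpm]
  exact expec_comp_eq_sum (measurable_spins hX) (fun s => F (signVec s))

theorem measureReal_setOf_eq_sum_spinLaw (hX : ∀ k, Measurable fun ω => X ω k)
    (hpm : ∀ ω k, X ω k = 1 ∨ X ω k = -1) (Φ : (Fin p → ℝ) → Prop) :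
    μ.real {ω | Φ (X ω)} = ∑ s, spinLaw μ X s * {s | Φ (signVec s)}.indicator 1 s := by
  rw [setOf_eq_preimage_spins hpm]
  exact measureReal_preimage_eq_sum (measurable_spins hX) _

theorem sum_spinLaw [IsProbabilityMeasure μ] (hX : ∀ k, Measurable fun ω => X ω k) :
    ∑ s, spinLaw μ X s = 1 := by
  simpa [spinLaw] using (measureReal_preimage_eq_sum (μ := μ) (measurable_spins hX) Set.univ).symm

end Spins

section CondIndep

variable {Ω : Type*} [MeasurableSpace Ω] {μ : Measure Ω} [IsFiniteMeasure μ]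
  {p : ℕ} {X : Ω → Fin p → ℝ} {i j : Fin p}

theorem measure_mul_eq_measure_mul_iff_real {A B C D : Set Ω} :
    μ A * μ B = μ C * μ D ↔ μ.real A * μ.real B = μ.real C * μ.real D := by
  have h (S : Set Ω) : μ S = ENNReal.ofReal (μ.real S) := (ofReal_measureReal).symm
  rw [h A, h B, h C, h D, ← ENNReal.ofReal_mul measureReal_nonneg,
    ← ENNReal.ofReal_mul measureReal_nonneg,
    ENNReal.ofReal_eq_ofReal_iff (by positivity) (by positivity)]

theorem measureReal_pair_event (hX : ∀ k, Measurable fun ω => X ω k)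
    (hpm : ∀ ω k, X ω k = 1 ∨ X ω k = -1) (hij : i ≠ j) (P Q : ℝ → Prop)
    {z : Fin p → ℝ} {y : Fin p → Bool} (hy : ∀ k, k ≠ i → k ≠ j → signVec y k = z k) :
    μ.real {ω | P (X ω i) ∧ Q (X ω j) ∧ ∀ k, k ≠ i → k ≠ j → X ω k = z k}
      = ∑ a, ∑ b, {c | P (if c then 1 else -1)}.indicator 1 a
          * {c | Q (if c then 1 else -1)}.indicator 1 b * spinLaw μ X (updatePair i j y a b) := by
  rw [measureReal_setOf_eq_sum_spinLaw hX hpm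
    (fun x => P (x i) ∧ Q (x j) ∧ ∀ k, k ≠ i → k ≠ j → x k = z k),
    ← sum_mul_indicator_eqOffPair hij]
  congr! with s
  exact forall₃_congr fun k hki hkj => by rw [← hy k hki hkj, signVec_apply_eq_iff]

theorem measureReal_pair_events_cross_sub (hX : ∀ k, Measurable fun ω => X ω k)
    (hpm : ∀ ω k, X ω k = 1 ∨ X ω k = -1) (hij : i ≠ j) (a b : ℝ) {z : Fin p → ℝ}
    {y : Fin p → Bool} (hy : ∀ k, k ≠ i → k ≠ j → signVec y k = z k) :
    μ.real {ω | X ω i = a ∧ X ω j = b ∧ ∀ k, k ≠ i → k ≠ j → X ω k = z k}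
          * μ.real {ω | ∀ k, k ≠ i → k ≠ j → X ω k = z k}
        - μ.real {ω | X ω i = a ∧ ∀ k, k ≠ i → k ≠ j → X ω k = z k}
          * μ.real {ω | X ω j = b ∧ ∀ k, k ≠ i → k ≠ j → X ω k = z k}
      = ({c | (if c then 1 else -1 : ℝ) = a}.indicator 1 true
          - {c | (if c then 1 else -1 : ℝ) = a}.indicator 1 false)
        * ({c | (if c then 1 else -1 : ℝ) = b}.indicator 1 true
          - {c | (if c then 1 else -1 : ℝ) = b}.indicator 1 false)
        * (spinLaw μ X (updatePair i j y true true) * spinLaw μ X (updatePair i j y false false)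
          - spinLaw μ X (updatePair i j y true false)
            * spinLaw μ X (updatePair i j y false true)) := by
  have e1 := measureReal_pair_event (μ := μ) hX hpm hij (· = a) (· = b) hy
  have e2 := measureReal_pair_event (μ := μ) hX hpm hij (fun _ => True) (fun _ => True) hy
  have e3 := measureReal_pair_event (μ := μ) hX hpm hij (· = a) (fun _ => True) hy
  have e4 := measureReal_pair_event (μ := μ) hX hpm hij (fun _ => True) (· = b) hy
  simp only [true_and, Set.ofPred_true, Set.indicator_univ, Pi.one_apply, one_mul, mul_one]
    at e2 e3 e4
  rw [e1, e2, e3, e4, sum_table_mul_sum_sub]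

theorem ciPair_iff (hX : ∀ k, Measurable fun ω => X ω k)
    (hpm : ∀ ω k, X ω k = 1 ∨ X ω k = -1) (hij : i ≠ j) :
    CIpair μ X i j ↔ ∀ y, spinLaw μ X (updatePair i j y true true)
        * spinLaw μ X (updatePair i j y false false)
      = spinLaw μ X (updatePair i j y true false)
        * spinLaw μ X (updatePair i j y false true) := by
  simp only [CIpair, measure_mul_eq_measure_mul_iff_real, ← sub_eq_zero (a := _ * _)]
  constructor
  · intro h y
    have := h 1 1 (signVec y)
    rw [measureReal_pair_events_cross_sub hX hpm hij 1 1 (fun _ _ _ => rfl)] at this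
    norm_num [Set.indicator_apply] at this
    exact this
  · intro h a b z
    by_cases hz : ∃ y : Fin p → Bool, ∀ k, k ≠ i → k ≠ j → signVec y k = z k
    · obtain ⟨y, hy⟩ := hz
      rw [measureReal_pair_events_cross_sub hX hpm hij a b hy, h y, mul_zero]
    · have hR : ∀ ω, ¬∀ k, k ≠ i → k ≠ j → X ω k = z k := fun ω hω =>
        hz ⟨spins X ω, fun k hki hkj => by rw [signVec_spins hpm]; exact hω k hki hkj⟩
      simp [hR]

end CondIndep

section BilinForm

open LinearMap (BilinForm)
open Submodule (span)

variable {R V : Type*} [CommRing R] [AddCommGroup V] [Module R V]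

theorem LinearMap.BilinForm.forall_orthogonal_sup_span_iff {B : BilinForm R V} (hB : B.IsSymm)
    {C : Submodule R V} {x y f g : V} (hf : x - f ∈ C) (hfC : ∀ c ∈ C, B f c = 0)
    (hg : y - g ∈ C) (hgC : ∀ c ∈ C, B g c = 0) :
    (∀ u ∈ (R ∙ x) ⊔ C, (∀ c ∈ C, B u c = 0) →
      ∀ v ∈ (R ∙ y) ⊔ C, (∀ c ∈ C, B v c = 0) → B u v = 0) ↔ B f y = 0 := by
  have hfy : B f y = B f g := by
    have h := hfC _ hg
    rwa [map_sub, sub_eq_zero] at h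
  constructor
  · intro h
    rw [hfy]
    refine h f (Submodule.mem_sup.2 ⟨x, Submodule.mem_span_singleton_self x, f - x,
      by simpa using C.neg_mem hf, by abel⟩) hfC g ?_ hgC
    exact Submodule.mem_sup.2 ⟨y, Submodule.mem_span_singleton_self y, g - y,
      by simpa using C.neg_mem hg, by abel⟩
  · intro h u hu huC v hv _
    obtain ⟨_, hax, c, hc, rfl⟩ := Submodule.mem_sup.1 hu
    obtain ⟨a, rfl⟩ := Submodule.mem_span_singleton.1 hax
    obtain ⟨_, hby, d, hd, rfl⟩ := Submodule.mem_sup.1 hv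
    obtain ⟨b, rfl⟩ := Submodule.mem_span_singleton.1 hby
    have hc' : a • (x - f) + c ∈ C := C.add_mem (C.smul_mem a hf) hc
    have hd' : b • (y - g) + d ∈ C := C.add_mem (C.smul_mem b hg) hd
    have hu' : a • x + c = a • f + (a • (x - f) + c) := by rw [smul_sub]; abel
    have hv' : b • y + d = b • g + (b • (y - g) + d) := by rw [smul_sub]; abel
    rw [hv', map_add, huC _ hd', add_zero, map_smul, hu', map_add, LinearMap.add_apply,
      map_smul, LinearMap.smul_apply, ← hfy, h, hB.eq _ g, hgC _ hc']
    simp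

theorem LinearMap.BilinForm.exists_sub_mem_forall_eq_zero {K : Type*} [Field K] [Module K V]
    [FiniteDimensional K V] {B : BilinForm K V} (hB : B.IsSymm) (hpos : ∀ v, B v v = 0 → v = 0)
    (C : Submodule K V) (y : V) : ∃ g, y - g ∈ C ∧ ∀ c ∈ C, B g c = 0 := by
  have hcompl : IsCompl C (B.orthogonal C) := by
    refine (LinearMap.BilinForm.isCompl_orthogonal_iff_disjoint hB.isRefl).2 ?_
    refine Submodule.disjoint_def.2 fun v hv hvo => hpos v ?_
    exact hvo v hv
  obtain ⟨c, g, hc, hgo, rfl⟩ := Submodule.codisjoint_iff_exists_add_eq.1 hcompl.codisjoint y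
  exact ⟨g, by simpa using hc, fun c' hc' => by rw [hB.eq]; exact hgo c' hc'⟩

end BilinForm

section AdditiveSpaces

open Submodule (span)

variable {Ω : Type*} [MeasurableSpace Ω] {μ : Measure Ω} {p : ℕ} {X : Ω → Fin p → ℝ}

def centeredSpin (μ : Measure Ω) (X : Ω → Fin p → ℝ) (k : Fin p) :
    (Fin p → Bool) → ℝ :=
  fun s => signVec s k - expec μ (fun ω => X ω k)

def linResidual (μ : Measure Ω) (X : Ω → Fin p → ℝ) (i : Fin p) (ξ : Fin p → ℝ) :
    (Fin p → Bool) → ℝ :=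
  centeredSpin μ X i - ∑ d, ξ d • centeredSpin μ X d

def spinForm (μ : Measure Ω) (X : Ω → Fin p → ℝ) :
    LinearMap.BilinForm ℝ ((Fin p → Bool) → ℝ) :=
  Matrix.toBilin' (Matrix.diagonal (spinLaw μ X))

theorem spinForm_apply (u v : (Fin p → Bool) → ℝ) :
    spinForm μ X u v = ∑ s, u s * v s * spinLaw μ X s := by
  simp only [spinForm, Matrix.toBilin'_apply', dotProduct, Matrix.mulVec_diagonal]
  exact Finset.sum_congr rfl fun s _ => by ring

theorem spinForm_isSymm : (spinForm μ X).IsSymm :=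
  LinearMap.BilinForm.isSymm_def.2 fun u v => by
    simp only [spinForm_apply, mul_comm (u _)]

theorem spinForm_self_eq_zero (hπ : ∀ s, 0 < spinLaw μ X s) {u : (Fin p → Bool) → ℝ}
    (hu : spinForm μ X u u = 0) : u = 0 := by
  rw [spinForm_apply, Finset.sum_eq_zero_iff_of_nonneg fun s _ =>
    mul_nonneg (mul_self_nonneg _) (hπ s).le] at hu
  funext s
  simpa [(hπ s).ne'] using hu s (Finset.mem_univ s)

variable [IsProbabilityMeasure μ]

theorem expec_const_add_mul (hX : ∀ k, Measurable fun ω => X ω k)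
    (hpm : ∀ ω k, X ω k = 1 ∨ X ω k = -1) (c d : ℝ) (k : Fin p) :
    expec μ (fun ω => c + d * X ω k) = c + d * expec μ (fun ω => X ω k) := by
  rw [expec_comp_eq_sum_spinLaw hX hpm (fun x => c + d * x k),
    expec_comp_eq_sum_spinLaw hX hpm (fun x => x k), Finset.mul_sum]
  simp only [mul_add, Finset.sum_add_distrib, ← Finset.sum_mul, sum_spinLaw (μ := μ) hX,
    one_mul]
  exact congrArg _ (Finset.sum_congr rfl fun s _ => by ring)

theorem addSpace_eq_map (hX : ∀ k, Measurable fun ω => X ω k)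
    (hpm : ∀ ω k, X ω k = 1 ∨ X ω k = -1) (A : Set (Fin p)) :
    addSpace μ X A
      = (span ℝ (centeredSpin μ X '' A)).map (LinearMap.funLeft ℝ ℝ (spins X)) := by
  apply le_antisymm
  · refine Submodule.span_le.2 ?_
    rintro _ ⟨k, hk, φ, hmean, rfl⟩
    -- on `{-1, 1}` every `φ` is affine, and a centred affine function of `X^k` is a multiple
    -- of `X^k - E X^k`
    have haff (ω : Ω) : φ (X ω k) = (φ 1 + φ (-1)) / 2 + (φ 1 - φ (-1)) / 2 * X ω k := by
      rcases hpm ω k with h | h <;> rw [h] <;> ring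
    simp only [haff, expec_const_add_mul hX hpm] at hmean
    refine ⟨((φ 1 - φ (-1)) / 2) • centeredSpin μ X k,
      Submodule.smul_mem _ _ (Submodule.subset_span ⟨k, hk, rfl⟩), funext fun ω => ?_⟩
    simp only [LinearMap.funLeft_apply, Pi.smul_apply, centeredSpin, signVec_spins hpm,
      smul_eq_mul, haff]
    linear_combination -hmean
  · rw [Submodule.map_span, Submodule.span_le]
    rintro _ ⟨_, ⟨k, hk, rfl⟩, rfl⟩
    refine Submodule.subset_span ⟨k, hk, fun x => x - expec μ (fun ω => X ω k), ?_, ?_⟩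
    · simpa [sub_eq_add_neg, add_comm] using
        expec_const_add_mul (μ := μ) hX hpm (-expec μ fun ω => X ω k) 1 k
    · funext ω
      simp [centeredSpin, signVec_spins hpm]

theorem expec_mul_comp_spins (hX : ∀ k, Measurable fun ω => X ω k)
    (u v : (Fin p → Bool) → ℝ) :
    expec μ (fun ω => u (spins X ω) * v (spins X ω)) = spinForm μ X u v := by
  rw [spinForm_apply, expec_comp_eq_sum (measurable_spins hX) (fun s => u s * v s)]
  exact Finset.sum_congr rfl fun s _ => mul_comm _ _

theorem aci_iff_spinForm (hX : ∀ k, Measurable fun ω => X ω k)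
    (hpm : ∀ ω k, X ω k = 1 ∨ X ω k = -1) (A B C : Set (Fin p)) :
    ACI μ X A B C ↔ ∀ u ∈ span ℝ (centeredSpin μ X '' (A ∪ C)),
      (∀ w ∈ span ℝ (centeredSpin μ X '' C), spinForm μ X u w = 0) →
      ∀ v ∈ span ℝ (centeredSpin μ X '' (B ∪ C)),
      (∀ w ∈ span ℝ (centeredSpin μ X '' C), spinForm μ X v w = 0) →
        spinForm μ X u v = 0 := by
  simp only [ACI, addSpace_eq_map hX hpm, Submodule.mem_map, forall_exists_index, and_imp,
    forall_apply_eq_imp_iff₂, LinearMap.funLeft_apply, expec_mul_comp_spins hX]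

end AdditiveSpaces

section LinearConditionalMean

open Submodule (span)

variable {Ω : Type*} [MeasurableSpace Ω] {μ : Measure Ω} {p : ℕ} {X : Ω → Fin p → ℝ}
  {i j : Fin p}

theorem setIntegral_eqOffPair [IsFiniteMeasure μ] (hX : ∀ k, Measurable fun ω => X ω k)
    (hpm : ∀ ω k, X ω k = 1 ∨ X ω k = -1) (hij : i ≠ j) (y : Fin p → Bool)
    (F : (Fin p → ℝ) → ℝ) :
    ∫ ω in {ω | ∀ d ∈ ({i, j}ᶜ : Set (Fin p)), X ω d = signVec y d}, F (X ω) ∂μ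
      = ∑ a, ∑ b, spinLaw μ X (updatePair i j y a b) * F (signVec (updatePair i j y a b)) := by
  have hset : {s : Fin p → Bool | ∀ d ∈ ({i, j}ᶜ : Set (Fin p)), signVec s d = signVec y d}
      = {s | EqOffPair i j s y} := by
    ext s
    simp [EqOffPair, signVec_apply_eq_iff, not_or, and_imp]
  rw [setOf_eq_preimage_spins hpm (fun x => ∀ d ∈ ({i, j}ᶜ : Set (Fin p)), x d = signVec y d),
    hset, ← sum_indicator_eqOffPair hij y (fun s => spinLaw μ X s * F (signVec s))]
  have hF : (fun ω => F (X ω)) = fun ω => (F ∘ signVec) (spins X ω) :=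
    funext fun ω => by rw [Function.comp_apply, signVec_spins hpm]
  rw [hF, setIntegral_preimage_eq_sum (measurable_spins hX)]
  exact Finset.sum_congr rfl fun s _ =>
    (Set.indicator_mul_right _ (spinLaw μ X) (F ∘ signVec)).symm

theorem sum_smul_centeredSpin_updatePair_apply {ξ : Fin p → ℝ}
    (hξ : ∀ d, d ∉ ({i, j}ᶜ : Set (Fin p)) → ξ d = 0) (y : Fin p → Bool) (a b : Bool) :
    (∑ d, ξ d • centeredSpin μ X d) (updatePair i j y a b)
      = (∑ d, ξ d • centeredSpin μ X d) y := by
  simp only [Finset.sum_apply, Pi.smul_apply, smul_eq_mul]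
  refine Finset.sum_congr rfl fun d _ => ?_
  by_cases hd : d ∈ ({i, j}ᶜ : Set (Fin p))
  · simp only [Set.mem_compl_iff, Set.mem_insert_iff, Set.mem_singleton_iff, not_or] at hd
    simp only [centeredSpin, signVec, eqOffPair_updatePair y a b d hd.1 hd.2]
  · rw [hξ d hd, zero_mul, zero_mul]

theorem sum_linResidual_mul_spinLaw_eq_zero [IsFiniteMeasure μ]
    (hX : ∀ k, Measurable fun ω => X ω k)
    (hpm : ∀ ω k, X ω k = 1 ∨ X ω k = -1) (hij : i ≠ j) {ξ : Fin p → ℝ}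
    (hξ : ∀ d, d ∉ ({i, j}ᶜ : Set (Fin p)) → ξ d = 0)
    (hLCM : ∀ z : Fin p → ℝ,
      (∫ ω in {ω | ∀ d ∈ ({i, j}ᶜ : Set (Fin p)), X ω d = z d},
          (X ω i - expec μ fun ω' => X ω' i) ∂μ) =
        (∑ d, ξ d * (z d - expec μ fun ω' => X ω' d)) *
          (μ {ω | ∀ d ∈ ({i, j}ᶜ : Set (Fin p)), X ω d = z d}).toReal)
    (y : Fin p → Bool) :
    ∑ a, ∑ b, linResidual μ X i ξ (updatePair i j y a b)
      * spinLaw μ X (updatePair i j y a b) = 0 := by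
  have h := hLCM (signVec y)
  have hmass := setIntegral_eqOffPair (μ := μ) hX hpm hij y (fun _ => 1)
  rw [setIntegral_const, smul_eq_mul, mul_one] at hmass
  rw [← measureReal_def, hmass, setIntegral_eqOffPair hX hpm hij y (fun x => x i - _)] at h
  simp only [linResidual, Pi.sub_apply, sum_smul_centeredSpin_updatePair_apply hξ, sub_mul,
    Finset.sum_sub_distrib]
  simp only [Finset.sum_apply, Pi.smul_apply, smul_eq_mul, centeredSpin,
    mul_comm (spinLaw μ X _), one_mul, ← Finset.mul_sum] at h ⊢
  linear_combination h

end LinearConditionalMean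

section AdditiveCondIndep

open Submodule (span)

variable {Ω : Type*} [MeasurableSpace Ω] {μ : Measure Ω} {p : ℕ} {X : Ω → Fin p → ℝ}
  {i j : Fin p}

theorem sum_sum_spinLaw_updatePair_pos (hπ : ∀ s, 0 < spinLaw μ X s) (y : Fin p → Bool) :
    0 < ∑ a, ∑ b, spinLaw μ X (updatePair i j y a b) :=
  Finset.sum_pos (fun _ _ => Finset.sum_pos (fun _ _ => hπ _) Finset.univ_nonempty)
    Finset.univ_nonempty

theorem four_mul_spinForm_apply (hij : i ≠ j) (u v : (Fin p → Bool) → ℝ) :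
    4 * spinForm μ X u v = ∑ y, ∑ a, ∑ b, u (updatePair i j y a b) * v (updatePair i j y a b)
      * spinLaw μ X (updatePair i j y a b) := by
  rw [spinForm_apply]
  exact (sum_sum_sum_updatePair hij _).symm

theorem centeredSpin_updatePair_apply_of_ne {k : Fin p} (hki : k ≠ i) (hkj : k ≠ j)
    (y : Fin p → Bool) (a b : Bool) :
    centeredSpin μ X k (updatePair i j y a b) = centeredSpin μ X k y := by
  simp only [centeredSpin, signVec, eqOffPair_updatePair y a b k hki hkj]

theorem linResidual_updatePair_apply (hij : i ≠ j) {ξ : Fin p → ℝ}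
    (hξ : ∀ d, d ∉ ({i, j}ᶜ : Set (Fin p)) → ξ d = 0) (y : Fin p → Bool) (a b : Bool) :
    linResidual μ X i ξ (updatePair i j y a b)
      = (if a then 1 else -1)
        - (expec μ (fun ω => X ω i) + (∑ d, ξ d • centeredSpin μ X d) y) := by
  simp only [linResidual, Pi.sub_apply, sum_smul_centeredSpin_updatePair_apply hξ, centeredSpin,
    signVec, updatePair_apply_left hij]
  ring

theorem spinForm_linResidual_centeredSpin_of_ne (hij : i ≠ j) {ξ : Fin p → ℝ}
    (hfiber : ∀ y, ∑ a, ∑ b, linResidual μ X i ξ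
      (updatePair i j y a b) * spinLaw μ X (updatePair i j y a b) = 0)
    {l : Fin p} (hli : l ≠ i) (hlj : l ≠ j) :
    spinForm μ X (linResidual μ X i ξ) (centeredSpin μ X l) = 0 := by
  have h4 := four_mul_spinForm_apply (μ := μ) (X := X) hij
    (linResidual μ X i ξ) (centeredSpin μ X l)
  simp only [centeredSpin_updatePair_apply_of_ne hli hlj, mul_right_comm _ (centeredSpin μ X l _),
    ← Finset.sum_mul, hfiber, zero_mul, Finset.sum_const_zero] at h4
  exact (mul_eq_zero.1 h4).resolve_left four_ne_zero

theorem spinForm_linResidual_centeredSpin_right (hij : i ≠ j) (hπ : ∀ s, 0 < spinLaw μ X s)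
    {κ : ℝ} (hκ : ∀ y, spinLaw μ X (updatePair i j y true true)
        * spinLaw μ X (updatePair i j y false false)
      = κ * (spinLaw μ X (updatePair i j y true false)
        * spinLaw μ X (updatePair i j y false true)))
    {ξ : Fin p → ℝ} (hξ : ∀ d, d ∉ ({i, j}ᶜ : Set (Fin p)) → ξ d = 0)
    (hfiber : ∀ y, ∑ a, ∑ b, linResidual μ X i ξ
      (updatePair i j y a b) * spinLaw μ X (updatePair i j y a b) = 0) :
    spinForm μ X (linResidual μ X i ξ) (centeredSpin μ X j)
      = (κ - 1) * ∑ y, spinLaw μ X (updatePair i j y true false)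
          * spinLaw μ X (updatePair i j y false true)
          / ∑ a, ∑ b, spinLaw μ X (updatePair i j y a b) := by
  set q : (Fin p → Bool) → Bool → Bool → ℝ :=
    fun y a b => spinLaw μ X (updatePair i j y a b)
  have hj (y : Fin p → Bool) (a b : Bool) : centeredSpin μ X j (updatePair i j y a b)
      = (if b then 1 else -1) - expec μ (fun ω => X ω j) := by
    simp only [centeredSpin, signVec, updatePair_apply_right]
  have hcov (y : Fin p → Bool) : ∑ a, ∑ b,
      linResidual μ X i ξ (updatePair i j y a b)
        * centeredSpin μ X j (updatePair i j y a b) * q y a b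
      = 4 * ((κ - 1) * (q y true false * q y false true / ∑ a, ∑ b, q y a b)) := by
    have htab := sum_table_mul_sum_sub (q y)
      (fun a => (if a then 1 else -1)
        - (expec μ (fun ω => X ω i) + (∑ d, ξ d • centeredSpin μ X d) y))
      (fun b => (if b then 1 else -1) - expec μ (fun ω => X ω j))
    have hfib := hfiber y
    have hκq : q y true true * q y false false = κ * (q y true false * q y false true) := hκ y
    simp only [linResidual_updatePair_apply hij hξ] at hfib
    rw [hfib, zero_mul, sub_zero, hκq] at htab
    simp only [if_true, Bool.false_eq_true, if_false] at htab
    simp only [linResidual_updatePair_apply hij hξ, hj]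
    rw [mul_div_assoc', mul_div_assoc', eq_div_iff (sum_sum_spinLaw_updatePair_pos hπ y).ne']
    linear_combination htab
  have h4 := four_mul_spinForm_apply (μ := μ) (X := X) hij
    (linResidual μ X i ξ) (centeredSpin μ X j)
  rw [Finset.sum_congr rfl fun y _ => hcov y, ← Finset.mul_sum, ← Finset.mul_sum] at h4
  linarith

variable [IsProbabilityMeasure μ]

theorem aci_iff_cross_ratio_eq_one (hX : ∀ k, Measurable fun ω => X ω k)
    (hpm : ∀ ω k, X ω k = 1 ∨ X ω k = -1) (hij : i ≠ j) (hπ : ∀ s, 0 < spinLaw μ X s)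
    {κ : ℝ} (hκ : ∀ y, spinLaw μ X (updatePair i j y true true)
        * spinLaw μ X (updatePair i j y false false)
      = κ * (spinLaw μ X (updatePair i j y true false)
        * spinLaw μ X (updatePair i j y false true)))
    (hC : ({i, j}ᶜ : Set (Fin p)) ≠ ∅) (hLCM : LinCondMean μ X i ({i, j}ᶜ : Set (Fin p))) :
    ACI μ X {i} {j} ({i, j}ᶜ : Set (Fin p)) ↔ κ = 1 := by
  obtain ⟨ξ, hξ, hLCM⟩ := hLCM.resolve_left hC
  have hfiber := sum_linResidual_mul_spinLaw_eq_zero hX hpm hij hξ hLCM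
  have hxf : centeredSpin μ X i - linResidual μ X i ξ
      ∈ span ℝ (centeredSpin μ X '' {i, j}ᶜ) := by
    rw [linResidual, sub_sub_cancel]
    refine Submodule.sum_mem _ fun d _ => ?_
    by_cases hd : d ∈ ({i, j}ᶜ : Set (Fin p))
    · exact Submodule.smul_mem _ _ (Submodule.subset_span ⟨d, hd, rfl⟩)
    · rw [hξ d hd, zero_smul]
      exact Submodule.zero_mem _
  have hfC : ∀ c ∈ span ℝ (centeredSpin μ X '' {i, j}ᶜ),
      spinForm μ X (linResidual μ X i ξ) c = 0 := by
    suffices span ℝ (centeredSpin μ X '' {i, j}ᶜ)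
        ≤ LinearMap.ker (spinForm μ X (linResidual μ X i ξ)) from fun c hc => this hc
    rw [Submodule.span_le]
    rintro _ ⟨l, hl, rfl⟩
    simp only [Set.mem_compl_iff, Set.mem_insert_iff, Set.mem_singleton_iff, not_or] at hl
    exact spinForm_linResidual_centeredSpin_of_ne hij hfiber hl.1 hl.2
  obtain ⟨g, hg, hgC⟩ := LinearMap.BilinForm.exists_sub_mem_forall_eq_zero spinForm_isSymm
    (fun _ => spinForm_self_eq_zero hπ) (span ℝ (centeredSpin μ X '' {i, j}ᶜ))
    (centeredSpin μ X j)
  have hS : 0 < ∑ y, spinLaw μ X (updatePair i j y true false)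
      * spinLaw μ X (updatePair i j y false true)
      / ∑ a, ∑ b, spinLaw μ X (updatePair i j y a b) :=
    Finset.sum_pos (fun y _ => div_pos (mul_pos (hπ _) (hπ _))
      (sum_sum_spinLaw_updatePair_pos hπ y)) Finset.univ_nonempty
  rw [aci_iff_spinForm hX hpm, Set.image_union, Set.image_union, Submodule.span_union,
    Submodule.span_union, Set.image_singleton, Set.image_singleton,
    LinearMap.BilinForm.forall_orthogonal_sup_span_iff spinForm_isSymm hxf hfC hg hgC,
    spinForm_linResidual_centeredSpin_right hij hπ hκ hξ hfiber, mul_eq_zero, sub_eq_zero,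
    or_iff_left hS.ne']

end AdditiveCondIndep

/-- under a symmetric Ising model, if `X^i` has linear conditional mean with
respect to `X^{−{i,j}}`, then conditional independence of `X^i` and `X^j` given the rest
is equivalent to additive conditional independence. -/
theorem stmt6 {Ω : Type*} [MeasurableSpace Ω] (μ : MeasureTheory.Measure Ω)
    [MeasureTheory.IsProbabilityMeasure μ]
    (p : ℕ) (hp : 3 ≤ p) (X : Ω → Fin p → ℝ) (hmeas : ∀ k, Measurable fun ω => X ω k)
    (β : Matrix (Fin p) (Fin p) ℝ) (hIsing : IsSymIsing μ X β)
    (i j : Fin p) (hij : i ≠ j)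
    (hLCM : LinCondMean μ X i ({i, j}ᶜ : Set (Fin p))) :
    CIpair μ X i j ↔ ACI μ X {i} {j} ({i, j}ᶜ : Set (Fin p)) := by
  have hπ := spinLaw_pos_of_isSymIsing hIsing
  have hκ := spinLaw_updatePair_cross_of_isSymIsing hIsing hij
  have hC : ({i, j}ᶜ : Set (Fin p)) ≠ ∅ := by
    rw [Ne, Set.compl_empty_iff]
    intro h
    have h2 := Set.ncard_insert_le i {j}
    rw [Set.ncard_singleton, h, Set.ncard_univ, Nat.card_eq_fintype_card, Fintype.card_fin] at h2
    omega
  rw [ciPair_iff hmeas hIsing.2.2.1 hij,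
    aci_iff_cross_ratio_eq_one hmeas hIsing.2.2.1 hij hπ hκ hC hLCM]
  refine ⟨fun h => ?_, fun h y => by rw [hκ y, h, one_mul]⟩
  have h0 := h (fun _ => false)
  rw [hκ] at h0
  exact (mul_eq_right₀ (mul_pos (hπ _) (hπ _)).ne').1 h0
end
end

section
/- Let X = (X^1,...,X^p) be a binary random vector (each X^i taking two values a_0 ≠ a_1) whose covariance matrix var(X) is invertible. Then for any pair i ≠ j, X^i and X^j are additively conditionally independent given X^{−{i,j}} if and only if the (i,j)-th entry of (var(X))^{-1} is zero; equivalently, if and only if the (i,j)-th entry of the inverse of the correlation matrix of X is zero. -/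
open MeasureTheory

noncomputable section

/-! A function of a binary variable is affine in it, so a mean-zero function of `X^k` is a
multiple of the centred coordinate `X^k - E X^k`. Hence `𝒜_{X^A}` is the span of the centred
coordinates indexed by `A`, and `L²` inner products inside these spaces are given by the
covariance matrix `V`: additive conditional independence becomes a statement about the bilinear
form of `V` on coefficient vectors. Choosing the coefficient vectors as suitable combinations of
rows of `K = V⁻¹` shows that it is equivalent to `K i j = 0`, because the principal minor
`K i i * K j j - K i j * K j i` of the positive definite matrix `K` does not vanish. The
correlation matrix is `D V D` for a positive diagonal `D`, so its inverse has the same zero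
pattern as `K`. -/

open MeasureTheory ProbabilityTheory Matrix

lemma Submodule.mem_span_image_iff_exists_fun_eq_zero {ι R M : Type*} [Fintype ι] [Semiring R]
    [AddCommMonoid M] [Module R M] (v : ι → M) (A : Set ι) (x : M) :
    x ∈ span R (v '' A) ↔
      ∃ c : ι → R, (∀ k ∉ A, c k = 0) ∧ ∑ k, c k • v k = x := by
  rw [Finsupp.mem_span_image_iff_linearCombination]
  constructor
  · rintro ⟨l, hl, rfl⟩
    exact ⟨l, (Finsupp.mem_supported' R l).mp hl, by
      rw [Finsupp.linearCombination_apply, Finsupp.sum_fintype _ _ (by simp)]⟩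
  · rintro ⟨c, hc, rfl⟩
    refine ⟨Finsupp.equivFunOnFinite.symm c, (Finsupp.mem_supported' R _).mpr hc, ?_⟩
    rw [Finsupp.linearCombination_apply, Finsupp.sum_fintype _ _ (by simp)]
    simp

lemma eq_single_add_single_of_forall_mem_compl_pair {ι M : Type*} [DecidableEq ι]
    [AddZeroClass M] {u : ι → M}
    {i j : ι} (hij : i ≠ j) (hu : ∀ l ∈ ({i, j}ᶜ : Set ι), u l = 0) :
    u = Pi.single i (u i) + Pi.single j (u j) := by
  funext l
  by_cases hli : l = i
  · subst hli
    simp [hij]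
  by_cases hlj : l = j
  · subst hlj
    simp [hli]
  simp [hli, hlj, hu l (by simp [hli, hlj])]

namespace Matrix

lemma PosDef.diag_mul_diag_sub_mul_pos {ι : Type*} {K : Matrix ι ι ℝ} (hK : K.PosDef)
    {i j : ι} (hij : i ≠ j) : 0 < K i i * K j j - K i j * K j i := by
  have hinj : Function.Injective ![i, j] := by
    intro a b hab
    fin_cases a <;> fin_cases b <;> simp_all [eq_comm]
  have hdet := (hK.submatrix hinj).det_pos
  rw [det_fin_two] at hdet
  simpa using hdet

variable {ι : Type*} [Fintype ι] [DecidableEq ι]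

lemma inv_diagonal_mul_mul_diagonal_apply {K : Type*} [Field K] {d : ι → K}
    (hd : ∀ k, d k ≠ 0) (V : Matrix ι ι K) (i j : ι) :
    (diagonal d * V * diagonal d)⁻¹ i j = (d i)⁻¹ * V⁻¹ i j * (d j)⁻¹ := by
  have hinv : (diagonal d)⁻¹ = diagonal fun k => (d k)⁻¹ :=
    inv_eq_left_inv (by simp [diagonal_mul_diagonal, hd])
  rw [Matrix.mul_inv_rev, Matrix.mul_inv_rev, hinv, diagonal_mul, mul_diagonal, mul_assoc]

/-- `ACI` transported to coefficient vectors: `c` and `d` are the coefficients of elements of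
`𝒜_{A ∪ C}` and `𝒜_{B ∪ C}` on the centred coordinates, whose Gram matrix is `V`, so that
`(c ᵥ* V) l` is the inner product of the first element with the `l`-th centred coordinate. -/
def CondOrthogonal (V : Matrix ι ι ℝ) (A B C : Set ι) : Prop :=
  ∀ c d : ι → ℝ, (∀ k ∉ A ∪ C, c k = 0) → (∀ l ∈ C, (c ᵥ* V) l = 0) →
    (∀ k ∉ B ∪ C, d k = 0) → (∀ l ∈ C, (d ᵥ* V) l = 0) → (c ᵥ* V) ⬝ᵥ d = 0

lemma single_add_single_vecMul_apply {R : Type*} [Semiring R] (K : Matrix ι ι R) (i j l : ι)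
    (a b : R) :
    ((Pi.single i a + Pi.single j b) ᵥ* K) l = a * K i l + b * K j l := by
  simp [add_vecMul]

lemma single_add_single_dotProduct {R : Type*} [Semiring R] (i j : ι) (a b : R) (d : ι → R) :
    (Pi.single i a + Pi.single j b) ⬝ᵥ d = a * d i + b * d j := by
  simp [add_dotProduct]

theorem condOrthogonal_pair_iff {V : Matrix ι ι ℝ} (hV : V.PosDef) {i j : ι} (hij : i ≠ j) :
    V.CondOrthogonal {i} {j} {i, j}ᶜ ↔ V⁻¹ i j = 0 := by
  have hdet : IsUnit V.det := (isUnit_iff_isUnit_det V).mp hV.isUnit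
  have hKV : V⁻¹ * V = 1 := nonsing_inv_mul V hdet
  have hVK : V * V⁻¹ = 1 := mul_nonsing_inv V hdet
  set K := V⁻¹
  have hnotA : ∀ k, k ∉ ({i} ∪ {i, j}ᶜ : Set ι) ↔ k = j := fun k => by
    by_cases k = j <;> aesop
  have hnotB : ∀ k, k ∉ ({j} ∪ {i, j}ᶜ : Set ι) ↔ k = i := fun k => by
    by_cases k = i <;> aesop
  have hsupp : ∀ (a b : ℝ), ∀ l ∈ ({i, j}ᶜ : Set ι),
      (Pi.single i a + Pi.single j b : ι → ℝ) l = 0 :=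
    fun a b l hl => by simp_all [not_or]
  constructor
  · intro h
    -- chosen so that `(u ᵥ* K) j = 0` and `(w ᵥ* K) i = 0`
    set u : ι → ℝ := Pi.single i (K j j) + Pi.single j (-K i j)
    set w : ι → ℝ := Pi.single i (-K j i) + Pi.single j (K i i)
    have huV : u ᵥ* K ᵥ* V = u := by rw [vecMul_vecMul, hKV, vecMul_one]
    have hwV : w ᵥ* K ᵥ* V = w := by rw [vecMul_vecMul, hKV, vecMul_one]
    have horth := h (u ᵥ* K) (w ᵥ* K)
      (fun k hk => by rw [(hnotA k).mp hk, single_add_single_vecMul_apply]; ring)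
      (fun l hl => by rw [huV]; exact hsupp _ _ l hl)
      (fun k hk => by rw [(hnotB k).mp hk, single_add_single_vecMul_apply]; ring)
      (fun l hl => by rw [hwV]; exact hsupp _ _ l hl)
    rw [huV, single_add_single_dotProduct, single_add_single_vecMul_apply,
      single_add_single_vecMul_apply] at horth
    have hprod : K i j * (K i i * K j j - K i j * K j i) = 0 := by linear_combination -horth
    exact (mul_eq_zero.mp hprod).resolve_right (hV.inv.diag_mul_diag_sub_mul_pos hij).ne'
  · intro hKij c d hc hcV hd _
    have hcj : c j = 0 := hc j ((hnotA j).mpr rfl)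
    have hdi : d i = 0 := hd i ((hnotB i).mpr rfl)
    have hu := eq_single_add_single_of_forall_mem_compl_pair hij hcV
    set u := c ᵥ* V
    have huj : u j = 0 := by
      have hcj' : (u ᵥ* K) j = 0 := by rw [vecMul_vecMul, hVK, vecMul_one, hcj]
      rw [hu, single_add_single_vecMul_apply, hKij, mul_zero, zero_add] at hcj'
      exact (mul_eq_zero.mp hcj').resolve_right hV.inv.diag_pos.ne'
    rw [hu, single_add_single_dotProduct, hdi, huj]
    ring

end Matrix

section CovarianceMatrix

variable {Ω ι : Type*} [MeasurableSpace Ω] {μ : Measure Ω} [IsProbabilityMeasure μ]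
  {X : Ω → ι → ℝ}

variable (μ X) in
def covMatrix : Matrix ι ι ℝ :=
  Matrix.of fun k l => covRV μ (fun ω => X ω k) (fun ω => X ω l)

variable (μ X) in
def centered (k : ι) : Ω → ℝ := fun ω => X ω k - expec μ (fun ω => X ω k)

lemma covRV_eq_covariance {f g : Ω → ℝ} (hf : MemLp f 2 μ) (hg : MemLp g 2 μ) :
    covRV μ f g = cov[f, g; μ] := by
  rw [covariance_eq_sub hf hg]
  rfl

lemma expec_centered {k : ι} (hX : Integrable (fun ω => X ω k) μ) :
    expec μ (centered μ X k) = 0 := by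
  simp [centered, expec, integral_sub hX (integrable_const _)]

lemma memLp_two_of_binary {a₀ a₁ : ℝ} (hmeas : ∀ k, Measurable fun ω => X ω k)
    (hval : ∀ ω k, X ω k = a₀ ∨ X ω k = a₁) (k : ι) : MemLp (fun ω => X ω k) 2 μ :=
  MemLp.of_bound (hmeas k).aestronglyMeasurable (max |a₀| |a₁|)
    (ae_of_all _ fun ω => by rcases hval ω k with h | h <;> simp [h])

lemma fun_eq_slope_smul_centered {a₀ a₁ : ℝ} (hmeas : ∀ k, Measurable fun ω => X ω k)
    (hval : ∀ ω k, X ω k = a₀ ∨ X ω k = a₁) {φ : ℝ → ℝ} {k : ι}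
    (hφ : expec μ (fun ω => φ (X ω k)) = 0) :
    (fun ω => φ (X ω k)) = slope φ a₀ a₁ • centered μ X k := by
  set s := slope φ a₀ a₁
  have hX : Integrable (fun ω => X ω k) μ :=
    (memLp_two_of_binary hmeas hval k).integrable one_le_two
  have haffine : ∀ ω, φ (X ω k) = φ a₀ + s * (X ω k - a₀) := fun ω => by
    rcases hval ω k with h | h <;> rw [h]
    · ring
    · have hslope := sub_smul_slope φ a₀ a₁
      rw [smul_eq_mul, vsub_eq_sub] at hslope
      linear_combination -hslope
  have hmean : φ a₀ + s * (expec μ (fun ω => X ω k) - a₀) = 0 := by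
    have hint : Integrable (fun ω => s * (X ω k - a₀)) μ :=
      (hX.sub (integrable_const _)).const_mul s
    rw [← hφ, expec, expec, funext haffine, integral_add (integrable_const _) hint,
      integral_const_mul, integral_sub hX (integrable_const _)]
    simp
  ext ω
  rw [haffine, Pi.smul_apply, smul_eq_mul, centered]
  linear_combination hmean

lemma addSpace_eq_span {a₀ a₁ : ℝ} (hmeas : ∀ k, Measurable fun ω => X ω k)
    (hval : ∀ ω k, X ω k = a₀ ∨ X ω k = a₁) (A : Set ι) :
    addSpace μ X A = Submodule.span ℝ (centered μ X '' A) := by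
  apply le_antisymm
  · rw [addSpace, Submodule.span_le]
    rintro _ ⟨k, hk, φ, hφ, rfl⟩
    rw [fun_eq_slope_smul_centered hmeas hval hφ]
    exact Submodule.smul_mem _ _ (Submodule.subset_span ⟨k, hk, rfl⟩)
  · rw [Submodule.span_le]
    rintro _ ⟨k, hk, rfl⟩
    exact Submodule.subset_span ⟨k, hk, fun x => x - expec μ (fun ω => X ω k),
      expec_centered ((memLp_two_of_binary hmeas hval k).integrable one_le_two), rfl⟩

variable [Fintype ι]

lemma expec_sum_centered_mul_sum_centered (hX : ∀ k, MemLp (fun ω => X ω k) 2 μ)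
    (c d : ι → ℝ) :
    expec μ (fun ω => (∑ k, c k • centered μ X k) ω * (∑ l, d l • centered μ X l) ω) =
      (c ᵥ* covMatrix μ X) ⬝ᵥ d := by
  have hY : ∀ k, MemLp (centered μ X k) 2 μ := fun k => (hX k).sub (memLp_const _)
  have hYY : ∀ k l,
      Integrable (fun ω => c k * d l * (centered μ X k ω * centered μ X l ω)) μ :=
    fun k l => ((hY k).integrable_mul (hY l)).const_mul _
  calc _ = ∑ k, ∑ l, c k * d l * ∫ ω, centered μ X k ω * centered μ X l ω ∂μ := by
        have hexpand :
            (fun ω => (∑ k, c k • centered μ X k) ω * (∑ l, d l • centered μ X l) ω) =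
              fun ω => ∑ k, ∑ l, c k * d l * (centered μ X k ω * centered μ X l ω) := by
          ext ω
          simp only [Finset.sum_apply, Pi.smul_apply, smul_eq_mul, Finset.sum_mul_sum]
          exact Finset.sum_congr rfl fun k _ => Finset.sum_congr rfl fun l _ => by ring
        rw [expec, hexpand,
          integral_finsetSum _ fun k _ => integrable_finsetSum _ fun l _ => hYY k l]
        refine Finset.sum_congr rfl fun k _ => ?_
        rw [integral_finsetSum _ fun l _ => hYY k l]
        exact Finset.sum_congr rfl fun l _ => integral_const_mul _ _
    _ = ∑ k, ∑ l, c k * d l * covMatrix μ X k l := by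
        simp only [covMatrix, of_apply, covRV_eq_covariance (hX _) (hX _)]
        rfl
    _ = (c ᵥ* covMatrix μ X) ⬝ᵥ d := by
        simp only [dotProduct, vecMul, Finset.sum_mul]
        rw [Finset.sum_comm]
        exact Finset.sum_congr rfl fun k _ => Finset.sum_congr rfl fun l _ => by ring

lemma posSemidef_covMatrix (hX : ∀ k, MemLp (fun ω => X ω k) 2 μ) :
    (covMatrix μ X).PosSemidef := by
  refine .of_dotProduct_mulVec_nonneg ?_ fun x => ?_
  · ext k l
    simp [covMatrix, covRV, mul_comm]
  · rw [star_trivial, dotProduct_mulVec, ← expec_sum_centered_mul_sum_centered hX]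
    exact integral_nonneg fun ω => mul_self_nonneg _

lemma mem_addSpace_iff {a₀ a₁ : ℝ} (hmeas : ∀ k, Measurable fun ω => X ω k)
    (hval : ∀ ω k, X ω k = a₀ ∨ X ω k = a₁) (A : Set ι) (f : Ω → ℝ) :
    f ∈ addSpace μ X A ↔
      ∃ c : ι → ℝ, (∀ k ∉ A, c k = 0) ∧ ∑ k, c k • centered μ X k = f := by
  rw [addSpace_eq_span hmeas hval, Submodule.mem_span_image_iff_exists_fun_eq_zero]

lemma forall_mem_addSpace_expec_mul_eq_zero_iff [DecidableEq ι] {a₀ a₁ : ℝ}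
    (hmeas : ∀ k, Measurable fun ω => X ω k) (hval : ∀ ω k, X ω k = a₀ ∨ X ω k = a₁)
    (c : ι → ℝ) (C : Set ι) :
    (∀ h ∈ addSpace μ X C,
        expec μ (fun ω => (∑ k, c k • centered μ X k) ω * h ω) = 0) ↔
      ∀ l ∈ C, (c ᵥ* covMatrix μ X) l = 0 := by
  have hX := memLp_two_of_binary (μ := μ) hmeas hval
  simp only [mem_addSpace_iff hmeas hval]
  constructor
  · intro h l hl
    have hl' := h _ ⟨Pi.single l 1,
      fun k hk => Pi.single_eq_of_ne (by rintro rfl; exact hk hl) 1, rfl⟩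
    rwa [expec_sum_centered_mul_sum_centered hX, dotProduct_single, mul_one] at hl'
  · rintro h _ ⟨e, he, rfl⟩
    rw [expec_sum_centered_mul_sum_centered hX]
    refine Finset.sum_eq_zero fun l _ => ?_
    by_cases hl : l ∈ C
    · simp [h l hl]
    · simp [he l hl]

theorem aci_iff_condOrthogonal [DecidableEq ι] {a₀ a₁ : ℝ}
    (hmeas : ∀ k, Measurable fun ω => X ω k) (hval : ∀ ω k, X ω k = a₀ ∨ X ω k = a₁)
    (A B C : Set ι) :
    ACI μ X A B C ↔ (covMatrix μ X).CondOrthogonal A B C := by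
  have hX := memLp_two_of_binary (μ := μ) hmeas hval
  have hmem := mem_addSpace_iff (μ := μ) hmeas hval
  have horth := forall_mem_addSpace_expec_mul_eq_zero_iff (μ := μ) hmeas hval
  constructor
  · intro h c d hc hcC hd hdC
    rw [← expec_sum_centered_mul_sum_centered hX]
    exact h _ ((hmem _ _).mpr ⟨c, hc, rfl⟩) ((horth c C).mpr hcC)
      _ ((hmem _ _).mpr ⟨d, hd, rfl⟩) ((horth d C).mpr hdC)
  · intro h f hf hfC g hg hgC
    obtain ⟨c, hc, rfl⟩ := (hmem _ _).mp hf
    obtain ⟨d, hd, rfl⟩ := (hmem _ _).mp hg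
    rw [expec_sum_centered_mul_sum_centered hX]
    exact h c d hc ((horth c C).mp hfC) hd ((horth d C).mp hgC)

end CovarianceMatrix

theorem stmt18_general {Ω : Type*} [MeasurableSpace Ω] (μ : MeasureTheory.Measure Ω)
    [MeasureTheory.IsProbabilityMeasure μ]
    (p : ℕ) (a₀ a₁ : ℝ)
    (X : Ω → Fin p → ℝ) (hmeas : ∀ k, Measurable fun ω => X ω k)
    (hval : ∀ ω k, X ω k = a₀ ∨ X ω k = a₁)
    (V C : Matrix (Fin p) (Fin p) ℝ)
    (hV : ∀ k l, V k l = covRV μ (fun ω => X ω k) (fun ω => X ω l))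
    (hC : ∀ k l, C k l = covRV μ (fun ω => X ω k) (fun ω => X ω l) /
      (Real.sqrt (covRV μ (fun ω => X ω k) (fun ω => X ω k)) *
        Real.sqrt (covRV μ (fun ω => X ω l) (fun ω => X ω l))))
    (hinv : IsUnit V) (i j : Fin p) (hij : i ≠ j) :
    (ACI μ X {i} {j} ({i, j}ᶜ : Set (Fin p)) ↔ V⁻¹ i j = 0) ∧
    (V⁻¹ i j = 0 ↔ C⁻¹ i j = 0) := by
  obtain rfl : V = covMatrix μ X := Matrix.ext hV
  have hPD : (covMatrix μ X).PosDef :=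
    (posSemidef_covMatrix (memLp_two_of_binary hmeas hval)).posDef_iff_isUnit.mpr hinv
  refine ⟨(aci_iff_condOrthogonal hmeas hval _ _ _).trans (condOrthogonal_pair_iff hPD hij), ?_⟩
  have hsd : ∀ k, 0 < √(covMatrix μ X k k) := fun k => Real.sqrt_pos.mpr hPD.diag_pos
  have hcorr : C = diagonal (fun k => (√(covMatrix μ X k k))⁻¹) * covMatrix μ X *
      diagonal (fun k => (√(covMatrix μ X k k))⁻¹) := by
    ext k l
    simp only [hC, covMatrix, of_apply, diagonal_mul, mul_diagonal, div_eq_mul_inv, mul_inv]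
    ring
  rw [hcorr, inv_diagonal_mul_mul_diagonal_apply fun k => inv_ne_zero (hsd k).ne']
  simp [(hsd i).ne', (hsd j).ne']

/-- for a binary random vector with invertible covariance matrix, additive
conditional independence of `X^i` and `X^j` given the rest holds iff the `(i,j)`-th entry
of `(var X)⁻¹` is zero, equivalently iff the `(i,j)`-th entry of the inverse of the
correlation matrix is zero. -/
theorem stmt18 {Ω : Type*} [MeasurableSpace Ω] (μ : MeasureTheory.Measure Ω)
    [MeasureTheory.IsProbabilityMeasure μ]
    (p : ℕ) (a₀ a₁ : ℝ) (ha : a₀ ≠ a₁)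
    (X : Ω → Fin p → ℝ) (hmeas : ∀ k, Measurable fun ω => X ω k)
    (hval : ∀ ω k, X ω k = a₀ ∨ X ω k = a₁)
    (V C : Matrix (Fin p) (Fin p) ℝ)
    (hV : ∀ k l, V k l = covRV μ (fun ω => X ω k) (fun ω => X ω l))
    (hC : ∀ k l, C k l = covRV μ (fun ω => X ω k) (fun ω => X ω l) /
      (Real.sqrt (covRV μ (fun ω => X ω k) (fun ω => X ω k)) *
        Real.sqrt (covRV μ (fun ω => X ω l) (fun ω => X ω l))))
    (hinv : IsUnit V) (i j : Fin p) (hij : i ≠ j) :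
    (ACI μ X {i} {j} ({i, j}ᶜ : Set (Fin p)) ↔ V⁻¹ i j = 0) ∧
    (V⁻¹ i j = 0 ↔ C⁻¹ i j = 0) :=
  stmt18_general μ p a₀ a₁ X hmeas hval V C hV hC hinv i j hij
end
end
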